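/- Under the stochastic subgradient oracle model with constants B, G > 0 and anchor x₀ ∈ X, assume f attains its minimum over X at x* ∈ X, and run the projected stochastic Halpern iteration with β_k = 1/(k+2) and τ_k = √(k+1)/(√6·B·(k+2)). Then the iterates remain bounded in mean square: for every K ≥ 0, E‖x_K − x*‖² ≤ ‖x₀ − x*‖² + G²/(3B²). -/

import Mathlib

open MeasureTheory
open scoped RealInnerProductSpace

/-!
Since `x*` minimizes `f` on `X` and `g` is an unbiased subgradient, `⟪x - x*, E g(x)⟫ ≥ 0` for
`x ∈ X`, and the nearest-point map onto the convex set `X` does not increase distances to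
`x* ∈ X`. Expanding the square of one step and bounding the anchor term
`2τβ⟪x - x₀, E g(x)⟫ ≤ β²‖x - x₀‖² + τ² E‖g(x)‖²` (Young), the step size
`6B²τ_k² = β_k(1 - β_k)` leaves `‖x_k - x₀‖²` with coefficient `β_k(5β_k - 2)/3 ≤ 0` for `k ≥ 1`
(and `x_0 = x₀`). Hence
`E‖x_{k+1} - x*‖² ≤ (1 - β_k) E‖x_k - x*‖² + β_k (‖x₀ - x*‖² + G²/(3B²))`,
and the bound propagates by induction.
-/

section

variable {E : Type*} [NormedAddCommGroup E] [InnerProductSpace ℝ E]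

theorem norm_smul_add_one_sub_smul_sq (t : ℝ) (a b : E) :
    ‖t • a + (1 - t) • b‖ ^ 2
      = t * ‖a‖ ^ 2 + (1 - t) * ‖b‖ ^ 2 - t * (1 - t) * ‖a - b‖ ^ 2 := by
  rw [norm_add_sq_real, norm_sub_sq_real, real_inner_smul_left, real_inner_smul_right,
    norm_smul, norm_smul, mul_pow, mul_pow, Real.norm_eq_abs, Real.norm_eq_abs, sq_abs, sq_abs]
  ring

theorem norm_sub_le_of_forall_norm_sub_le {X : Set E} (hX : Convex ℝ X) {u p : E} (hp : p ∈ X)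
    (hmin : ∀ y ∈ X, ‖p - u‖ ≤ ‖y - u‖) {y : E} (hy : y ∈ X) : ‖p - y‖ ≤ ‖u - y‖ := by
  have : Nonempty X := ⟨⟨p, hp⟩⟩
  have hinf : ‖u - p‖ = ⨅ w : X, ‖u - w‖ :=
    le_antisymm (le_ciInf fun w => by simpa only [norm_sub_rev u] using hmin w w.2)
        (ciInf_le ⟨0, by rintro _ ⟨w, rfl⟩; positivity⟩ (⟨p, hp⟩ : X))
  have hvi : ⟪u - p, y - p⟫ ≤ 0 := (norm_eq_iInf_iff_real_inner_le_zero hX hp).1 hinf y hy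
  have hsq : ‖u - y‖ ^ 2 = ‖u - p‖ ^ 2 - 2 * ⟪u - p, y - p⟫ + ‖y - p‖ ^ 2 := by
    rw [← norm_sub_sq_real, sub_sub_sub_cancel_right]
  rw [norm_sub_rev p]
  nlinarith [norm_nonneg (u - y), norm_nonneg (y - p), sq_nonneg ‖u - p‖]

/-- `n` stands for the mean `∫ g` and `M` for the second moment `∫ ‖g‖²` of the stochastic
subgradient at `x`. -/
theorem halpern_step_expansion_le {x₀ x xstar n : E} {M B G β τ : ℝ} (hB : 0 < B) (hτ0 : 0 ≤ τ)
    (hτ : 6 * B ^ 2 * τ ^ 2 ≤ β * (1 - β)) (hβ : β ≤ 2 / 5 ∨ x = x₀)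
    (hopt : 0 ≤ ⟪x - xstar, n⟫) (hnM : ‖n‖ ^ 2 ≤ M) (hM : M ≤ B ^ 2 * ‖x - x₀‖ ^ 2 + G ^ 2) :
    ‖β • x₀ + (1 - β) • x - xstar‖ ^ 2 - 2 * τ * ⟪β • x₀ + (1 - β) • x - xstar, n⟫ + τ ^ 2 * M
      ≤ (1 - β) * ‖x - xstar‖ ^ 2 + β * (‖x₀ - xstar‖ ^ 2 + G ^ 2 / (3 * B ^ 2)) := by
  set r := ‖x - x₀‖
  have hcomb : ‖β • x₀ + (1 - β) • x - xstar‖ ^ 2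
      = β * ‖x₀ - xstar‖ ^ 2 + (1 - β) * ‖x - xstar‖ ^ 2 - β * (1 - β) * r ^ 2 := by
    have h := norm_smul_add_one_sub_smul_sq β (x₀ - xstar) (x - xstar)
    rw [sub_sub_sub_cancel_right, norm_sub_rev x₀ x] at h
    rw [← h]
    congr 2
    module
  have hinner : ⟪β • x₀ + (1 - β) • x - xstar, n⟫ = ⟪x - xstar, n⟫ - β * ⟪x - x₀, n⟫ := by
    rw [← real_inner_smul_left, ← inner_sub_left]
    congr 1
    module
  have hcross : 2 * τ * (β * ⟪x - x₀, n⟫) ≤ β ^ 2 * r ^ 2 + τ ^ 2 * M := by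
    have hcs : β * ⟪x - x₀, n⟫ ≤ |β| * r * ‖n‖ := by
      rw [mul_assoc]
      exact (le_abs_self _).trans ((abs_mul _ _).trans_le
        (mul_le_mul_of_nonneg_left (abs_real_inner_le_norm _ _) (abs_nonneg β)))
    nlinarith [two_mul_le_add_sq (|β| * r) (τ * ‖n‖), sq_abs β, mul_le_mul_of_nonneg_left hcs hτ0]
  have hβ1 : 0 ≤ β * (1 - β) := le_trans (by positivity) hτ
  have hτB : 2 * τ ^ 2 * G ^ 2 ≤ β * (1 - β) * (G ^ 2 / (3 * B ^ 2)) := by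
    rw [mul_div_assoc', le_div_iff₀ (by positivity)]
    nlinarith [sq_nonneg G]
  -- the total coefficient of `r ^ 2`, up to the factor `1 / 3`
  have hr : β * (5 * β - 2) * r ^ 2 ≤ 0 := by
    rcases hβ with hβ | rfl
    · have : 0 ≤ β := by nlinarith
      exact mul_nonpos_of_nonpos_of_nonneg (mul_nonpos_of_nonneg_of_nonpos this (by linarith))
        (sq_nonneg r)
    · simp [r]
  have hG : 0 ≤ β ^ 2 * (G ^ 2 / (3 * B ^ 2)) := by positivity
  rw [hcomb, hinner]
  nlinarith [mul_le_mul_of_nonneg_left hM (sq_nonneg τ), mul_nonneg hτ0 hopt,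
    mul_le_mul_of_nonneg_right hτ (sq_nonneg r)]

end

section

variable {Ω : Type*} [MeasurableSpace Ω] {μ : Measure Ω} [IsProbabilityMeasure μ]
  {E : Type*} [NormedAddCommGroup E] [InnerProductSpace ℝ E] [CompleteSpace E]

theorem sq_norm_integral_le {g : Ω → E} (hg : MemLp g 2 μ) :
    ‖∫ ω, g ω ∂μ‖ ^ 2 ≤ ∫ ω, ‖g ω‖ ^ 2 ∂μ :=
  (convexOn_univ_norm.pow (fun _ _ => norm_nonneg _) 2).map_integral_le
    (continuous_norm.pow 2).continuousOn isClosed_univ (ae_of_all _ fun _ => trivial)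
    (hg.integrable one_le_two) (hg.integrable_norm_pow' (p := 2))

theorem integral_norm_sub_smul_sq {g : Ω → E} (hg : MemLp g 2 μ) (v : E) (τ : ℝ) :
    ∫ ω, ‖v - τ • g ω‖ ^ 2 ∂μ = ‖v‖ ^ 2 - 2 * τ * ⟪v, ∫ ω, g ω ∂μ⟫ + τ ^ 2 * ∫ ω, ‖g ω‖ ^ 2 ∂μ := by
  have hg1 : Integrable g μ := hg.integrable one_le_two
  simp only [norm_sub_sq_real, real_inner_smul_right, norm_smul, mul_pow, Real.norm_eq_abs, sq_abs]
  have hinner : Integrable (fun ω => 2 * (τ * ⟪v, g ω⟫)) μ :=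
    ((hg1.const_inner v).const_mul τ).const_mul 2
  have hfirst : Integrable (fun ω => ‖v‖ ^ 2 - 2 * (τ * ⟪v, g ω⟫)) μ :=
    (integrable_const _).sub hinner
  rw [integral_add hfirst ((hg.integrable_norm_pow' (p := 2)).const_mul _),
    integral_sub (integrable_const _) hinner, integral_const, integral_const_mul,
    integral_const_mul, integral_const_mul, integral_inner hg1]
  simp [mul_assoc]

theorem lintegral_halpern_step_le {X : Set E} (hX : Convex ℝ X) {proj : E → E}
    (hprojX : ∀ u, proj u ∈ X) (hproj : ∀ u, ∀ y ∈ X, ‖proj u - u‖ ≤ ‖y - u‖)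
    {x₀ x xstar : E} (hxstar : xstar ∈ X) {g : Ω → E} (hg : MemLp g 2 μ)
    (hopt : 0 ≤ ⟪x - xstar, ∫ ω, g ω ∂μ⟫) {B G β τ : ℝ}
    (hBG : ∫ ω, ‖g ω‖ ^ 2 ∂μ ≤ B ^ 2 * ‖x - x₀‖ ^ 2 + G ^ 2) (hB : 0 < B) (hτ0 : 0 ≤ τ)
    (hτ : 6 * B ^ 2 * τ ^ 2 ≤ β * (1 - β)) (hβ : β ≤ 2 / 5 ∨ x = x₀) :
    ∫⁻ ω, ENNReal.ofReal (‖proj (β • x₀ + (1 - β) • x - τ • g ω) - xstar‖ ^ 2) ∂μ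
      ≤ ENNReal.ofReal
          ((1 - β) * ‖x - xstar‖ ^ 2 + β * (‖x₀ - xstar‖ ^ 2 + G ^ 2 / (3 * B ^ 2))) := by
  set v := β • x₀ + (1 - β) • x - xstar
  have hvg : MemLp (fun ω => v - τ • g ω) 2 μ := (memLp_const v).sub (hg.const_smul τ)
  calc ∫⁻ ω, ENNReal.ofReal (‖proj (β • x₀ + (1 - β) • x - τ • g ω) - xstar‖ ^ 2) ∂μ
      ≤ ∫⁻ ω, ENNReal.ofReal (‖v - τ • g ω‖ ^ 2) ∂μ := by
        refine lintegral_mono fun ω => ENNReal.ofReal_le_ofReal ?_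
        rw [sub_right_comm]
        exact pow_le_pow_left₀ (norm_nonneg _)
          (norm_sub_le_of_forall_norm_sub_le hX (hprojX _) (hproj _) hxstar) 2
    _ = ENNReal.ofReal (∫ ω, ‖v - τ • g ω‖ ^ 2 ∂μ) :=
        (ofReal_integral_eq_lintegral_ofReal (hvg.integrable_norm_pow' (p := 2))
          (ae_of_all _ fun _ => sq_nonneg _)).symm
    _ ≤ _ := by
        refine ENNReal.ofReal_le_ofReal ?_
        rw [integral_norm_sub_smul_sq hg]
        exact halpern_step_expansion_le hB hτ0 hτ hβ hopt (sq_norm_integral_le hg) hBG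

end

theorem integral_pi_succ_le {Ω : Type*} [MeasurableSpace Ω] (μ : Measure Ω) [SigmaFinite μ]
    {K : ℕ} {F : (Fin (K + 1) → Ω) → ℝ} (hF : Measurable F) (hF0 : ∀ w, 0 ≤ F w)
    {h : (Fin K → Ω) → ℝ} (hh : Integrable h (Measure.pi fun _ => μ)) (hh0 : ∀ v, 0 ≤ h v)
    (hle : ∀ v, ∫⁻ ω, ENNReal.ofReal (F (Fin.snoc v ω)) ∂μ ≤ ENNReal.ofReal (h v)) :
    Integrable F (Measure.pi fun _ => μ) ∧
      ∫ w, F w ∂(Measure.pi fun _ => μ) ≤ ∫ v, h v ∂(Measure.pi fun _ => μ) := by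
  have hlint : ∫⁻ w, ENNReal.ofReal (F w) ∂(Measure.pi fun _ => μ)
      ≤ ∫⁻ v, ENNReal.ofReal (h v) ∂(Measure.pi fun _ => μ) := by
    rw [← (measurePreserving_piFinSuccAbove (fun _ => μ) (Fin.last K)).symm.lintegral_comp
      hF.ennreal_ofReal, lintegral_prod_symm' _ ?meas]
    · refine lintegral_mono fun v => ?_
      simpa [MeasurableEquiv.piFinSuccAbove_symm_apply, Fin.insertNthEquiv, Fin.insertNth_last']
        using hle v
    · exact hF.ennreal_ofReal.comp (MeasurableEquiv.measurable _)
  have hfin := hh.lintegral_lt_top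
  have hFint : Integrable F (Measure.pi fun _ => μ) :=
    ⟨hF.aestronglyMeasurable,
      (hasFiniteIntegral_iff_ofReal (ae_of_all _ hF0)).2 (hlint.trans_lt hfin)⟩
  refine ⟨hFint, ?_⟩
  rw [integral_eq_lintegral_of_nonneg_ae (ae_of_all _ hF0) hF.aestronglyMeasurable,
    integral_eq_lintegral_of_nonneg_ae (ae_of_all _ hh0) hh.aestronglyMeasurable]
  exact ENNReal.toReal_mono hfin.ne hlint

theorem halpern_stepsize_sq {B : ℝ} (hB : B ≠ 0) (k : ℕ) :
    6 * B ^ 2 * (Real.sqrt ((k : ℝ) + 1) / (Real.sqrt 6 * B * ((k : ℝ) + 2))) ^ 2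
      = 1 / ((k : ℝ) + 2) * (1 - 1 / ((k : ℝ) + 2)) := by
  rw [div_pow, mul_pow, mul_pow, Real.sq_sqrt (by positivity), Real.sq_sqrt (by norm_num)]
  field_simp
  ring

theorem halpern_sgd_sq_dist_le {E : Type*} [NormedAddCommGroup E] [InnerProductSpace ℝ E]
    [CompleteSpace E] [MeasurableSpace E] [BorelSpace E]
    {Ω : Type*} [MeasurableSpace Ω] (μ : Measure Ω) [IsProbabilityMeasure μ]
    {X : Set E} (hX : Convex ℝ X) {proj : E → E} (hprojX : ∀ u, proj u ∈ X)
    (hproj : ∀ u, ∀ y ∈ X, ‖proj u - u‖ ≤ ‖y - u‖) {x₀ xstar : E} (hx₀ : x₀ ∈ X)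
    (hxstar : xstar ∈ X) {B G : ℝ} (hB : 0 < B) {g : E → Ω → E} (hgL2 : ∀ z, MemLp (g z) 2 μ)
    (hopt : ∀ z ∈ X, 0 ≤ ⟪z - xstar, ∫ ω, g z ω ∂μ⟫)
    (hBG : ∀ z, ∫ ω, ‖g z ω‖ ^ 2 ∂μ ≤ B ^ 2 * ‖z - x₀‖ ^ 2 + G ^ 2) {β τ : ℕ → ℝ}
    (hβ : ∀ k, 0 < k → β k ≤ 2 / 5) (hτ0 : ∀ k, 0 ≤ τ k)
    (hτ : ∀ k, 6 * B ^ 2 * τ k ^ 2 ≤ β k * (1 - β k))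
    {x : (k : ℕ) → (Fin k → Ω) → E} (hxmeas : ∀ k, Measurable (x k)) (hx0 : ∀ w, x 0 w = x₀)
    (hxrec : ∀ k (w : Fin (k + 1) → Ω), x (k + 1) w = proj (β k • x₀ + (1 - β k) • x k (Fin.init w)
        - τ k • g (x k (Fin.init w)) (w (Fin.last k)))) (K : ℕ) :
    Integrable (fun w => ‖x K w - xstar‖ ^ 2) (Measure.pi fun _ : Fin K => μ) ∧
      ∫ w, ‖x K w - xstar‖ ^ 2 ∂(Measure.pi fun _ : Fin K => μ)
        ≤ ‖x₀ - xstar‖ ^ 2 + G ^ 2 / (3 * B ^ 2) := by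
  have hmem : ∀ k (w : Fin k → Ω), x k w ∈ X := by
    rintro (_ | k) w
    · rw [hx0]; exact hx₀
    · rw [hxrec]; exact hprojX _
  have hβx : ∀ k (w : Fin k → Ω), β k ≤ 2 / 5 ∨ x k w = x₀ := by
    rintro (_ | k) w
    · exact Or.inr (hx0 w)
    · exact Or.inl (hβ _ k.succ_pos)
  set R := ‖x₀ - xstar‖ ^ 2 + G ^ 2 / (3 * B ^ 2)
  induction K with
  | zero =>
    simp only [hx0]
    refine ⟨integrable_const _, ?_⟩
    rw [integral_const, probReal_univ, one_smul]
    exact le_add_of_nonneg_right (by positivity)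
  | succ K ih =>
    have hβmul : 0 ≤ β K * (1 - β K) := le_trans (by positivity) (hτ K)
    have hβ0 : 0 ≤ β K := by nlinarith
    have hβ1 : 0 ≤ 1 - β K := by nlinarith
    refine (integral_pi_succ_le μ (((hxmeas _).sub_const xstar).norm.pow_const 2)
      (h := fun v => (1 - β K) * ‖x K v - xstar‖ ^ 2 + β K * R)
      (fun _ => sq_nonneg _) ((ih.1.const_mul (1 - β K)).add (integrable_const (β K * R)))
      (fun v => ?_) (fun v => ?_)).imp_right fun h => h.trans ?_
    · positivity
    · simp only [hxrec, Fin.init_snoc, Fin.snoc_last]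
      exact lintegral_halpern_step_le hX hprojX hproj hxstar (hgL2 _) (hopt _ (hmem K v))
        (hBG _) hB (hτ0 K) (hτ K) (hβx K v)
    · rw [integral_add (ih.1.const_mul _) (integrable_const _), integral_const_mul,
        integral_const]
      simp only [probReal_univ, smul_eq_mul, one_mul]
      nlinarith [mul_le_mul_of_nonneg_left ih.2 hβ1]

theorem halpern_sgd_iterates_bounded_general
    {d : ℕ} {Ω : Type*} [MeasurableSpace Ω] (μ : Measure Ω) [IsProbabilityMeasure μ]
    (X : Set (EuclideanSpace ℝ (Fin d)))
    (hXconv : Convex ℝ X)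
    (f : EuclideanSpace ℝ (Fin d) → ℝ)
    (proj : EuclideanSpace ℝ (Fin d) → EuclideanSpace ℝ (Fin d))
    (hprojX : ∀ u, proj u ∈ X)
    (hproj : ∀ u, ∀ y ∈ X, ‖proj u - u‖ ≤ ‖y - u‖)
    (x₀ : EuclideanSpace ℝ (Fin d)) (hx₀ : x₀ ∈ X)
    (B G : ℝ) (hB : 0 < B)
    (g : EuclideanSpace ℝ (Fin d) → Ω → EuclideanSpace ℝ (Fin d))
    (hgL2 : ∀ x, MemLp (g x) 2 μ)
    (hunbiased : ∀ x y, f x + ⟪∫ ω, g x ω ∂μ, y - x⟫ ≤ f y)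
    (hBG : ∀ x, ∫ ω, ‖g x ω‖ ^ 2 ∂μ ≤ B ^ 2 * ‖x - x₀‖ ^ 2 + G ^ 2)
    (xstar : EuclideanSpace ℝ (Fin d)) (hxstarX : xstar ∈ X)
    (hxstarmin : ∀ y ∈ X, f xstar ≤ f y)
    (β τ : ℕ → ℝ)
    (hβ : ∀ k, β k = 1 / ((k : ℝ) + 2))
    (hτ : ∀ k, τ k = Real.sqrt ((k : ℝ) + 1) / (Real.sqrt 6 * B * ((k : ℝ) + 2)))
    (x : (k : ℕ) → (Fin k → Ω) → EuclideanSpace ℝ (Fin d))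
    (hxmeas : ∀ k, Measurable (x k))
    (hx0 : ∀ w, x 0 w = x₀)
    (hxrec : ∀ k (w : Fin (k + 1) → Ω),
      x (k + 1) w = proj (β k • x₀ + (1 - β k) • x k (Fin.init w)
        - τ k • g (x k (Fin.init w)) (w (Fin.last k)))) :
    ∀ K : ℕ,
      ∫ w, ‖x K w - xstar‖ ^ 2 ∂(Measure.pi fun _ : Fin K => μ)
        ≤ ‖x₀ - xstar‖ ^ 2 + G ^ 2 / (3 * B ^ 2) := by
  intro K
  refine (halpern_sgd_sq_dist_le μ hXconv hprojX hproj hx₀ hxstarX hB hgL2 (fun z hz => ?_) hBG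
    (fun k hk => ?_) (fun k => ?_) (fun k => ?_) hxmeas hx0 hxrec K).2
  · have := hunbiased z xstar
    rw [← neg_sub, inner_neg_right, real_inner_comm] at this
    linarith [hxstarmin z hz]
  · rw [hβ, div_le_div_iff₀ (by positivity) (by norm_num)]
    have : (1 : ℝ) ≤ k := by exact_mod_cast hk
    linarith
  · rw [hτ]
    positivity
  · rw [hβ, hτ, halpern_stepsize_sq hB.ne']

/-- Mean-square boundedness of the iterates of the projected stochastic Halpern iteration under (BG-0). -/
theorem halpern_sgd_iterates_bounded
    {d : ℕ} {Ω : Type*} [MeasurableSpace Ω] (μ : Measure Ω) [IsProbabilityMeasure μ]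
    (X : Set (EuclideanSpace ℝ (Fin d))) (hXne : X.Nonempty) (hXcl : IsClosed X)
    (hXconv : Convex ℝ X)
    (f : EuclideanSpace ℝ (Fin d) → ℝ) (hfconv : ConvexOn ℝ Set.univ f)
    (proj : EuclideanSpace ℝ (Fin d) → EuclideanSpace ℝ (Fin d))
    (hprojX : ∀ u, proj u ∈ X)
    (hproj : ∀ u, ∀ y ∈ X, ‖proj u - u‖ ≤ ‖y - u‖)
    (x₀ : EuclideanSpace ℝ (Fin d)) (hx₀ : x₀ ∈ X)
    (B G : ℝ) (hB : 0 < B) (hG : 0 < G)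
    (g : EuclideanSpace ℝ (Fin d) → Ω → EuclideanSpace ℝ (Fin d))
    (hgmeas : Measurable (Function.uncurry g))
    (hgL2 : ∀ x, MemLp (g x) 2 μ)
    (hunbiased : ∀ x y, f x + ⟪∫ ω, g x ω ∂μ, y - x⟫ ≤ f y)
    (hBG : ∀ x, ∫ ω, ‖g x ω‖ ^ 2 ∂μ ≤ B ^ 2 * ‖x - x₀‖ ^ 2 + G ^ 2)
    (xstar : EuclideanSpace ℝ (Fin d)) (hxstarX : xstar ∈ X)
    (hxstarmin : ∀ y ∈ X, f xstar ≤ f y)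
    (β τ : ℕ → ℝ)
    (hβ : ∀ k, β k = 1 / ((k : ℝ) + 2))
    (hτ : ∀ k, τ k = Real.sqrt ((k : ℝ) + 1) / (Real.sqrt 6 * B * ((k : ℝ) + 2)))
    (x : (k : ℕ) → (Fin k → Ω) → EuclideanSpace ℝ (Fin d))
    (hxmeas : ∀ k, Measurable (x k))
    (hx0 : ∀ w, x 0 w = x₀)
    (hxrec : ∀ k (w : Fin (k + 1) → Ω),
      x (k + 1) w = proj (β k • x₀ + (1 - β k) • x k (Fin.init w)
        - τ k • g (x k (Fin.init w)) (w (Fin.last k)))) :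
    ∀ K : ℕ,
      ∫ w, ‖x K w - xstar‖ ^ 2 ∂(Measure.pi fun _ : Fin K => μ)
        ≤ ‖x₀ - xstar‖ ^ 2 + G ^ 2 / (3 * B ^ 2) :=
  halpern_sgd_iterates_bounded_general μ X hXconv f proj hprojX hproj x₀ hx₀ B G hB g hgL2 hunbiased
    hBG xstar hxstarX hxstarmin β τ hβ hτ x hxmeas hx0 hxrec
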